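/- KL bound for distilling EBMs into ARMs: for all r, q : 𝒮(x) × 𝒜 → ℝ and every prompt x, KL(p^EBM_{R_r}(·|x), p^ARM_q(·|x)) ≤ 2T · max_{s ∈ 𝒮(x), y ∈ 𝒜} |q*(s,y) − q(s,y)|, where q* = M(r). -/

import Mathlib

open Finset

/-! Contexts extending a fixed prompt `x` by `t < T` vocabulary tokens; a context is a
prefix of vocabulary tokens of length `< T`.  `none : Option V` plays the role of `EOS`. -/

/-- Contexts extending the prompt by fewer than `T` vocabulary tokens. -/
abbrev Ctx (V : Type) (T : ℕ) := Σ t : Fin T, Fin (t : ℕ) → V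

/-- Admissible next tokens at a context: only `EOS` (= `none`) at maximal contexts. -/
def adm (V : Type) [Fintype V] (T : ℕ) (s : Ctx V T) : Finset (Option V) :=
  if (s.1 : ℕ) + 1 = T then {none} else Finset.univ

/-- Soft value `V_q(s) = log ∑_{j admissible at s} exp q(s, j)`. -/
noncomputable def Vq (V : Type) [Fintype V] (T : ℕ)
    (q : Ctx V T × Option V → ℝ) (s : Ctx V T) : ℝ :=
  Real.log (∑ a ∈ adm V T s, Real.exp (q (s, a)))

/-- Next-token policy `π_q(j | s) = exp (q(s,j) - V_q(s))`. -/
noncomputable def piq (V : Type) [Fintype V] (T : ℕ)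
    (q : Ctx V T × Option V → ℝ) (s : Ctx V T) (a : Option V) : ℝ :=
  Real.exp (q (s, a) - Vq V T q s)

/-- Extending a context by one vocabulary token. -/
def ext (V : Type) (T : ℕ) (s : Ctx V T) (v : V) (h : (s.1 : ℕ) + 1 < T) : Ctx V T :=
  ⟨⟨(s.1 : ℕ) + 1, h⟩, Fin.snoc s.2 v⟩

/-- The strict prefix of length `i` of (the vocabulary part of) a finished response `y`. -/
def pref (V : Type) (T : ℕ) (y : Ctx V T) (i : Fin (y.1 : ℕ)) : Ctx V T :=
  ⟨⟨(i : ℕ), lt_trans i.isLt y.1.isLt⟩, fun j => y.2 (Fin.castLE (le_of_lt i.isLt) j)⟩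

/-- The mapping `M` (backward recursion), as a function of the depth of the context. -/
noncomputable def Mgo (V : Type) [Fintype V] (T : ℕ) (r : Ctx V T × Option V → ℝ)
    (t : ℕ) (ht : t < T) (s : Fin t → V) (a : Option V) : ℝ :=
  match a with
  | none => r (⟨⟨t, ht⟩, s⟩, none)
  | some v =>
    r (⟨⟨t, ht⟩, s⟩, some v) +
      if h : t + 1 < T then
        Real.log (∑ b ∈ adm V T ⟨⟨t + 1, h⟩, Fin.snoc s v⟩,
          Real.exp (Mgo V T r (t + 1) h (Fin.snoc s v) b))
      else 0
termination_by T - t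
decreasing_by omega

/-- The mapping `q = M(r)`: `q(s, EOS) = r(s, EOS)` and
`q(s, y) = r(s, y) + V_q(s ⊕ y)` for a vocabulary token `y`. -/
noncomputable def Mmap (V : Type) [Fintype V] (T : ℕ)
    (r : Ctx V T × Option V → ℝ) : Ctx V T × Option V → ℝ :=
  fun p => Mgo V T r (p.1.1 : ℕ) p.1.1.isLt p.1.2 p.2

/-- The inverse mapping `r = M⁻¹(q)`: `r(s, EOS) = q(s, EOS)` and
`r(s, y) = q(s, y) - V_q(s ⊕ y)` for a vocabulary token `y`. -/
noncomputable def Minv (V : Type) [Fintype V] (T : ℕ)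
    (q : Ctx V T × Option V → ℝ) : Ctx V T × Option V → ℝ :=
  fun p =>
    match p with
    | (s, none) => q (s, none)
    | (s, some v) =>
      q (s, some v) - if h : (s.1 : ℕ) + 1 < T then Vq V T q (ext V T s v h) else 0

/-- Autoregressive probability of the finished response `y ⊕ EOS`. -/
noncomputable def pARM (V : Type) [Fintype V] (T : ℕ)
    (q : Ctx V T × Option V → ℝ) (y : Ctx V T) : ℝ :=
  (∏ i : Fin (y.1 : ℕ), piq V T q (pref V T y i) (some (y.2 i))) * piq V T q y none

/-- Sequence-level reward `R_r(x, y) = ∑_t r(x ⊕ y_{<t}, y_t)` of the finished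
response `y ⊕ EOS`. -/
noncomputable def Rr (V : Type) [Fintype V] (T : ℕ)
    (r : Ctx V T × Option V → ℝ) (y : Ctx V T) : ℝ :=
  (∑ i : Fin (y.1 : ℕ), r (pref V T y i, some (y.2 i))) + r (y, none)

/-- Sequence-level log-partition `A^EBM_{R_r}(x)`. -/
noncomputable def Aebm (V : Type) [Fintype V] (T : ℕ)
    (r : Ctx V T × Option V → ℝ) : ℝ :=
  Real.log (∑ y : Ctx V T, Real.exp (Rr V T r y))

/-- EBM probability of the finished response `y ⊕ EOS`. -/
noncomputable def pEBM (V : Type) [Fintype V] (T : ℕ)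
    (r : Ctx V T × Option V → ℝ) (y : Ctx V T) : ℝ :=
  Real.exp (Rr V T r y - Aebm V T r)

/-! With `q* = M(r)` the soft values telescope along a response:
`R_r(y) = log p^ARM_{q*}(y) + V_{q*}(x)`. Since an autoregressive model is normalised, this forces
`A^EBM_{R_r}(x) = V_{q*}(x)`, i.e. `p^EBM_{R_r} = p^ARM_{q*}`. The KL divergence is then at most
the largest log-ratio `log p^ARM_{q*}(y) - log p^ARM_q(y)`, a sum of at most `T` terms
`(q* - q)(s, a) - (V_{q*} - V_q)(s)`; each is at most `2ε`, as log-sum-exp is `1`-Lipschitz for the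
sup norm. -/

lemma Real.log_sum_exp_le_add {ι : Type*} {A : Finset ι} (hA : A.Nonempty) {f g : ι → ℝ} {ε : ℝ}
    (h : ∀ i ∈ A, f i ≤ g i + ε) :
    Real.log (∑ i ∈ A, Real.exp (f i)) ≤ Real.log (∑ i ∈ A, Real.exp (g i)) + ε := by
  have hpos : 0 < ∑ i ∈ A, Real.exp (g i) := Finset.sum_pos (fun i _ => Real.exp_pos _) hA
  calc Real.log (∑ i ∈ A, Real.exp (f i))
      ≤ Real.log (∑ i ∈ A, Real.exp (g i) * Real.exp ε) :=
        Real.log_le_log (Finset.sum_pos (fun i _ => Real.exp_pos _) hA)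
          (Finset.sum_le_sum fun i hi => by rw [← Real.exp_add]; exact Real.exp_le_exp.2 (h i hi))
    _ = Real.log (∑ i ∈ A, Real.exp (g i)) + ε := by
        rw [← Finset.sum_mul, Real.log_mul hpos.ne' (Real.exp_ne_zero ε), Real.log_exp]

lemma sum_mul_log_div_le {ι : Type*} [Fintype ι] {p p' : ι → ℝ} {c : ℝ} (hp : ∀ i, 0 ≤ p i)
    (hsum : ∑ i, p i = 1) (h : ∀ i, Real.log (p i / p' i) ≤ c) :
    ∑ i, p i * Real.log (p i / p' i) ≤ c :=
  calc ∑ i, p i * Real.log (p i / p' i) ≤ ∑ i, p i * c :=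
        Finset.sum_le_sum fun i _ => mul_le_mul_of_nonneg_left (h i) (hp i)
    _ = c := by rw [← Finset.sum_mul, hsum, one_mul]

section
variable {V : Type} {T : ℕ}

lemma pref_ext_castSucc (s : Ctx V T) (v : V) (h : (s.1 : ℕ) + 1 < T) (i : Fin (s.1 : ℕ)) :
    pref V T (_root_.ext V T s v h) (Fin.castSucc i) = pref V T s i := by
  unfold pref _root_.ext
  congr 1
  funext j
  exact Fin.snoc_castSucc (α := fun _ => V) (i := Fin.castLE i.isLt.le j) v s.2

lemma pref_ext_last (s : Ctx V T) (v : V) (h : (s.1 : ℕ) + 1 < T) :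
    pref V T (_root_.ext V T s v h) (Fin.last s.1) = s := by
  obtain ⟨⟨t, ht⟩, f⟩ := s
  unfold pref _root_.ext
  congr 1
  funext j
  exact Fin.snoc_castSucc (α := fun _ => V) _ _ _

@[to_additive]
lemma prod_pref_ext {M : Type*} [CommMonoid M] (F : Ctx V T → V → M) (s : Ctx V T) (v : V)
    (h : (s.1 : ℕ) + 1 < T) :
    ∏ i : Fin ((_root_.ext V T s v h).1 : ℕ),
        F (pref V T (_root_.ext V T s v h) i) ((_root_.ext V T s v h).2 i) =
      (∏ i : Fin (s.1 : ℕ), F (pref V T s i) (s.2 i)) * F s v := by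
  change ∏ i : Fin ((s.1 : ℕ) + 1),
    F (pref V T (_root_.ext V T s v h) i) (Fin.snoc (α := fun _ => V) s.2 v i) = _
  rw [Fin.prod_univ_castSucc]
  simp only [pref_ext_castSucc, pref_ext_last, Fin.snoc_castSucc, Fin.snoc_last]

theorem Ctx.induction {P : Ctx V T → Prop} (hT : 0 < T) (root : P ⟨⟨0, hT⟩, Fin.elim0⟩)
    (step : ∀ s v h, P s → P (_root_.ext V T s v h)) (y : Ctx V T) : P y := by
  suffices ∀ t (s : Fin t → V) (ht : t < T), P ⟨⟨t, ht⟩, s⟩ from this _ y.2 y.1.isLt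
  intro t s
  induction s using Fin.snocInduction with
  | elim0 => exact fun _ => root
  | snoc s v ih => exact fun ht => step ⟨⟨_, by omega⟩, s⟩ v ht (ih _)

variable [Fintype V]

lemma adm_nonempty (s : Ctx V T) : (adm V T s).Nonempty :=
  ⟨none, by unfold adm; split <;> simp⟩

lemma adm_of_lt {s : Ctx V T} (h : (s.1 : ℕ) + 1 < T) : adm V T s = Finset.univ := by
  rw [adm, if_neg h.ne]

lemma adm_of_eq {s : Ctx V T} (h : (s.1 : ℕ) + 1 = T) : adm V T s = {none} := by
  rw [adm, if_pos h]

lemma sum_piq_adm (q : Ctx V T × Option V → ℝ) (s : Ctx V T) :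
    ∑ a ∈ adm V T s, piq V T q s a = 1 := by
  have hpos : 0 < ∑ a ∈ adm V T s, Real.exp (q (s, a)) :=
    Finset.sum_pos (fun a _ => Real.exp_pos _) (adm_nonempty s)
  simp_rw [piq, Vq, Real.exp_sub, ← Finset.sum_div, Real.exp_log hpos, div_self hpos.ne']

noncomputable def logPiq (V : Type) [Fintype V] (T : ℕ) (q : Ctx V T × Option V → ℝ) :
    Ctx V T × Option V → ℝ :=
  fun p => q p - Vq V T q p.1

lemma pARM_eq_exp_Rr (q : Ctx V T × Option V → ℝ) (y : Ctx V T) :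
    pARM V T q y = Real.exp (Rr V T (logPiq V T q) y) := by
  rw [pARM, Rr, Real.exp_add, Real.exp_sum]
  rfl

noncomputable def prefixProb (V : Type) [Fintype V] (T : ℕ) (q : Ctx V T × Option V → ℝ)
    (y : Ctx V T) : ℝ :=
  ∏ i : Fin (y.1 : ℕ), piq V T q (pref V T y i) (some (y.2 i))

/- `reachProb t` is the probability that generation reaches depth `t`; responses of length
exactly `t` carry mass `reachProb t - reachProb (t + 1)`, so the total telescopes to
`reachProb 0 = 1`. -/
noncomputable def reachProb (V : Type) [Fintype V] (T : ℕ) (q : Ctx V T × Option V → ℝ)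
    (t : ℕ) : ℝ :=
  if h : t < T then ∑ s : Fin t → V, prefixProb V T q ⟨⟨t, h⟩, s⟩ else 0

lemma sum_pARM_depth (q : Ctx V T × Option V → ℝ) (t : ℕ) (ht : t < T) :
    ∑ s : Fin t → V, pARM V T q ⟨⟨t, ht⟩, s⟩ = reachProb V T q t - reachProb V T q (t + 1) := by
  change ∑ s, prefixProb V T q _ * piq V T q _ none = _
  rw [reachProb, dif_pos ht, reachProb]
  by_cases h : t + 1 < T
  · have hnone : ∀ s : Fin t → V, piq V T q ⟨⟨t, ht⟩, s⟩ none =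
        1 - ∑ v, piq V T q ⟨⟨t, ht⟩, s⟩ (some v) := fun s => by
      rw [← sum_piq_adm q ⟨⟨t, ht⟩, s⟩, adm_of_lt h, Fintype.sum_option, add_sub_cancel_right]
    have hnext : ∑ s' : Fin (t + 1) → V, prefixProb V T q ⟨⟨t + 1, h⟩, s'⟩ =
        ∑ s : Fin t → V, ∑ v, prefixProb V T q ⟨⟨t, ht⟩, s⟩ * piq V T q ⟨⟨t, ht⟩, s⟩ (some v) := by
      rw [← (Fin.snocEquiv fun _ => V).sum_comp, Fintype.sum_prod_type, Finset.sum_comm]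
      exact Finset.sum_congr rfl fun s _ => Finset.sum_congr rfl fun v _ =>
        prod_pref_ext (fun s v => piq V T q s (some v)) ⟨⟨t, ht⟩, s⟩ v h
    simp only [dif_pos h, hnext, hnone, mul_sub, mul_one, Finset.mul_sum, Finset.sum_sub_distrib]
  · have hnone : ∀ s : Fin t → V, piq V T q ⟨⟨t, ht⟩, s⟩ none = 1 := fun s => by
      rw [← sum_piq_adm q ⟨⟨t, ht⟩, s⟩, adm_of_eq (by omega : t + 1 = T), Finset.sum_singleton]
    simp only [dif_neg h, hnone, mul_one, sub_zero]

theorem sum_pARM (hT : 0 < T) (q : Ctx V T × Option V → ℝ) : ∑ y, pARM V T q y = 1 :=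
  calc ∑ y, pARM V T q y = ∑ t : Fin T, ∑ s, pARM V T q ⟨t, s⟩ := Fintype.sum_sigma _
    _ = ∑ t : Fin T, (reachProb V T q t - reachProb V T q (t + 1)) :=
        Finset.sum_congr rfl fun t _ => sum_pARM_depth q t t.isLt
    _ = reachProb V T q 0 - reachProb V T q T := by
        rw [Fin.sum_univ_eq_sum_range (fun t => reachProb V T q t - reachProb V T q (t + 1)),
          Finset.sum_range_sub']
    _ = 1 := by simp [reachProb, hT, prefixProb]

lemma Mmap_none (r : Ctx V T × Option V → ℝ) (s : Ctx V T) :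
    Mmap V T r (s, none) = r (s, none) := by
  rw [Mmap, Mgo]

lemma Mmap_some (r : Ctx V T × Option V → ℝ) (s : Ctx V T) (v : V) (h : (s.1 : ℕ) + 1 < T) :
    Mmap V T r (s, some v) = r (s, some v) + Vq V T (Mmap V T r) (_root_.ext V T s v h) := by
  rw [Mmap, Mgo, dif_pos h]
  rfl

lemma sum_pref_Mmap (hT : 0 < T) (r : Ctx V T × Option V → ℝ) (y : Ctx V T) :
    ∑ i : Fin (y.1 : ℕ), r (pref V T y i, some (y.2 i)) =
      ∑ i : Fin (y.1 : ℕ), logPiq V T (Mmap V T r) (pref V T y i, some (y.2 i)) +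
        Vq V T (Mmap V T r) ⟨⟨0, hT⟩, Fin.elim0⟩ - Vq V T (Mmap V T r) y := by
  induction y using Ctx.induction hT with
  | root => simp only [univ_eq_empty, sum_empty, zero_add, sub_self]
  | step s v h ih =>
    rw [sum_pref_ext (fun s v => r (s, some v)),
      sum_pref_ext (fun s v => logPiq V T (Mmap V T r) (s, some v)), ih]
    simp only [logPiq, Mmap_some r s v h]
    ring

theorem Rr_eq_Rr_logPiq_Mmap (hT : 0 < T) (r : Ctx V T × Option V → ℝ) (y : Ctx V T) :
    Rr V T r y =
      Rr V T (logPiq V T (Mmap V T r)) y + Vq V T (Mmap V T r) ⟨⟨0, hT⟩, Fin.elim0⟩ := by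
  rw [Rr, Rr, sum_pref_Mmap hT]
  simp only [logPiq, Mmap_none]
  ring

theorem pEBM_eq_pARM_Mmap (hT : 0 < T) (r : Ctx V T × Option V → ℝ) :
    pEBM V T r = pARM V T (Mmap V T r) := by
  set V₀ := Vq V T (Mmap V T r) ⟨⟨0, hT⟩, Fin.elim0⟩
  have hexp : ∀ y, Real.exp (Rr V T r y) = pARM V T (Mmap V T r) y * Real.exp V₀ := fun y => by
    rw [pARM_eq_exp_Rr, ← Real.exp_add, Rr_eq_Rr_logPiq_Mmap hT]
  have hA : Aebm V T r = V₀ := by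
    rw [Aebm, Finset.sum_congr rfl fun y _ => hexp y, ← Finset.sum_mul, sum_pARM hT, one_mul,
      Real.log_exp]
  funext y
  rw [pEBM, hA, pARM_eq_exp_Rr, Rr_eq_Rr_logPiq_Mmap hT, add_sub_cancel_right]

lemma abs_Vq_sub_le {q₁ q₂ : Ctx V T × Option V → ℝ} {ε : ℝ} (h : ∀ p, |q₁ p - q₂ p| ≤ ε)
    (s : Ctx V T) : |Vq V T q₁ s - Vq V T q₂ s| ≤ ε := by
  have hadm := adm_nonempty s
  refine abs_sub_le_iff.2 ⟨sub_le_iff_le_add'.2 (Real.log_sum_exp_le_add hadm fun a _ => ?_),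
    sub_le_iff_le_add'.2 (Real.log_sum_exp_le_add hadm fun a _ => ?_)⟩
  · linarith [(abs_sub_le_iff.1 (h (s, a))).1]
  · linarith [(abs_sub_le_iff.1 (h (s, a))).2]

lemma abs_logPiq_sub_le {q₁ q₂ : Ctx V T × Option V → ℝ} {ε : ℝ} (h : ∀ p, |q₁ p - q₂ p| ≤ ε)
    (p : Ctx V T × Option V) : |logPiq V T q₁ p - logPiq V T q₂ p| ≤ 2 * ε :=
  calc |logPiq V T q₁ p - logPiq V T q₂ p|
      = |(q₁ p - q₂ p) - (Vq V T q₁ p.1 - Vq V T q₂ p.1)| := by rw [logPiq, logPiq]; ring_nf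
    _ ≤ |q₁ p - q₂ p| + |Vq V T q₁ p.1 - Vq V T q₂ p.1| := abs_sub _ _
    _ ≤ 2 * ε := by linarith [h p, abs_Vq_sub_le h p.1]

lemma abs_Rr_sub_le {f g : Ctx V T × Option V → ℝ} {δ : ℝ} (h : ∀ p, |f p - g p| ≤ δ)
    (y : Ctx V T) : |Rr V T f y - Rr V T g y| ≤ T * δ := by
  have hδ : 0 ≤ δ := (abs_nonneg _).trans (h (y, none))
  have hlen : ((y.1 : ℕ) : ℝ) + 1 ≤ T := by exact_mod_cast y.1.isLt
  calc |Rr V T f y - Rr V T g y|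
      = |∑ i : Fin (y.1 : ℕ), (f (pref V T y i, some (y.2 i)) - g (pref V T y i, some (y.2 i))) +
          (f (y, none) - g (y, none))| := by rw [Rr, Rr, Finset.sum_sub_distrib]; ring_nf
    _ ≤ ∑ i : Fin (y.1 : ℕ), |f (pref V T y i, some (y.2 i)) - g (pref V T y i, some (y.2 i))| +
          |f (y, none) - g (y, none)| :=
        (abs_add_le _ _).trans (add_le_add_left (Finset.abs_sum_le_sum_abs _ _) _)
    _ ≤ ∑ _i : Fin (y.1 : ℕ), δ + δ := add_le_add (Finset.sum_le_sum fun i _ => h _) (h _)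
    _ = ((y.1 : ℕ) + 1) * δ := by
        simp only [sum_const, card_univ, Fintype.card_fin, nsmul_eq_mul]; ring
    _ ≤ T * δ := mul_le_mul_of_nonneg_right hlen hδ

lemma log_pARM_div_le {q₁ q₂ : Ctx V T × Option V → ℝ} {ε : ℝ} (h : ∀ p, |q₁ p - q₂ p| ≤ ε)
    (y : Ctx V T) : Real.log (pARM V T q₁ y / pARM V T q₂ y) ≤ 2 * T * ε := by
  rw [pARM_eq_exp_Rr, pARM_eq_exp_Rr, ← Real.exp_sub, Real.log_exp]
  calc _ ≤ |Rr V T (logPiq V T q₁) y - Rr V T (logPiq V T q₂) y| := le_abs_self _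
    _ ≤ T * (2 * ε) := abs_Rr_sub_le (abs_logPiq_sub_le h) y
    _ = 2 * T * ε := by ring

end

/-- **KL bound for distilling EBMs into ARMs.**
For all `r, q : 𝒮(x) × 𝒜 → ℝ` and every prompt `x`,
`KL(p^EBM_{R_r}(·|x), p^ARM_q(·|x)) ≤ 2T ⬝ max_{s, y} |q*(s,y) - q(s,y)|`,
where `q* = M(r)`. -/
theorem kl_distillation_bound (V : Type) [Fintype V] (T : ℕ) (hT : 1 ≤ T)
    (r q qstar : Ctx V T × Option V → ℝ) (hqstar : qstar = Mmap V T r) :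
    (∑ y : Ctx V T, pEBM V T r y * Real.log (pEBM V T r y / pARM V T q y)) ≤
      2 * (T : ℝ) *
        Finset.univ.sup' ⟨((⟨⟨0, hT⟩, Fin.elim0⟩ : Ctx V T), none), Finset.mem_univ _⟩
          (fun p : Ctx V T × Option V => |qstar p - q p|) := by
  subst hqstar
  rw [pEBM_eq_pARM_Mmap hT]
  exact sum_mul_log_div_le (fun y => (pARM_eq_exp_Rr _ y ▸ Real.exp_pos _).le) (sum_pARM hT _)
    (log_pARM_div_le fun p => Finset.le_sup' (fun p => |Mmap V T r p - q p|) (Finset.mem_univ p))
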